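/- arXiv:0710.2268 — 8 statements merged into one kernel-verified Lean document; each statement's English description precedes it below -/
import Mathlib

section
/- Let n ≥ 1 and let a_1,…,a_n be integers. In the weighted DAG G_A, there exists a directed path from s = 0 to t = n+1 of total weight 0 if and only if there exists a nonempty subset S ⊆ {1,…,n} with Σ_{j∈S} a_j = 0. (Correctness of the reduction from SUBSET SUM used to prove that the Null Weighted Path problem is NP-complete on linear orders.) -/
def gaWeight (n : ℕ) (a : ℕ → ℤ) (i j : ℕ) : ℤ :=
  if j ≤ n then a j else if i = 0 then 1 else 0

lemma chainMono {x : ℕ → ℕ} {m : ℕ} (h : ∀ r, r < m → x r < x (r + 1)) :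
    ∀ i j, i < j → j ≤ m → x i < x j := by
  intro i j
  induction j with
  | zero => omega
  | succ j ih =>
    intro hij hjm
    rcases Nat.lt_or_ge i j with hlt | hge
    · exact lt_trans (ih hlt (by omega)) (h j (by omega))
    · have : i = j := by omega
      subst this
      exact h i (by omega)

/-- Correctness of the reduction from SUBSET SUM: `G_A` has a directed path from
`s = 0` to `t = n+1` of total weight `0` iff some nonempty `S ⊆ {1,…,n}` has
`∑_{j ∈ S} a j = 0`. -/
theorem nullWeightedPath_iff_subsetSum (n : ℕ) (hn : 1 ≤ n) (a : ℕ → ℤ) :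
    (∃ (m : ℕ) (x : ℕ → ℕ), 1 ≤ m ∧ x 0 = 0 ∧ x m = n + 1 ∧
        (∀ r, r < m → x r < x (r + 1)) ∧
        ∑ r ∈ Finset.range m, gaWeight n a (x r) (x (r + 1)) = 0) ↔
      ∃ S : Finset ℕ, S.Nonempty ∧ S ⊆ Finset.Icc 1 n ∧ ∑ j ∈ S, a j = 0 := by
  constructor
  · rintro ⟨m, x, hm, hx0, hxm, hinc, hsum⟩
    have hmono := chainMono hinc
    have hm2 : 2 ≤ m := by
      by_contra h
      have hm1 : m = 1 := by omega
      subst hm1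
      simp [Finset.sum_range_one, gaWeight, hx0, hxm] at hsum
    obtain ⟨k, rfl⟩ : ∃ k, m = k + 1 := ⟨m - 1, by omega⟩
    have hk1 : 1 ≤ k := by omega
    have hub : ∀ r, r < k → x (r + 1) ≤ n := by
      intro r hr
      have := hmono (r + 1) (k + 1) (by omega) le_rfl
      omega
    have hlb : ∀ r, r < k → 1 ≤ x (r + 1) := by
      intro r hr
      have := hmono 0 (r + 1) (by omega) (by omega)
      omega
    refine ⟨(Finset.range k).image (fun r => x (r + 1)), ?_, ?_, ?_⟩
    · exact ⟨x 1, Finset.mem_image.2 ⟨0, Finset.mem_range.2 (by omega), rfl⟩⟩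
    · intro j hj
      obtain ⟨r, hr, rfl⟩ := Finset.mem_image.1 hj
      rw [Finset.mem_range] at hr
      exact Finset.mem_Icc.2 ⟨hlb r hr, hub r hr⟩
    · rw [Finset.sum_image]
      · rw [Finset.sum_range_succ] at hsum
        have hlast : gaWeight n a (x k) (x (k + 1)) = 0 := by
          have h1 : ¬ x (k + 1) ≤ n := by omega
          have h2 : x k ≠ 0 := by
            have := hmono 0 k (by omega) (by omega); omega
          simp [gaWeight, h1, h2]
        rw [hlast, add_zero] at hsum
        rw [← hsum]
        apply Finset.sum_congr rfl
        intro r hr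
        rw [Finset.mem_range] at hr
        simp [gaWeight, hub r hr]
      · intro r hr s hs hrs
        simp only [Finset.mem_coe, Finset.mem_range] at hr hs
        by_contra hne
        rcases Nat.lt_or_ge r s with h | h
        · exact absurd hrs (ne_of_lt (hmono (r+1) (s+1) (by omega) (by omega)))
        · exact absurd hrs.symm (ne_of_lt (hmono (s+1) (r+1) (by omega) (by omega)))
  · rintro ⟨S, hS, hSsub, hsum⟩
    set k := S.card with hk
    have hk1 : 1 ≤ k := Finset.card_pos.2 hS
    set f := S.orderEmbOfFin (rfl : S.card = k) with hf
    have hfS : ∀ i : Fin k, f i ∈ S := fun i => S.orderEmbOfFin_mem rfl i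
    have hbound : ∀ i : Fin k, 1 ≤ f i ∧ f i ≤ n := by
      intro i
      exact Finset.mem_Icc.1 (hSsub (hfS i))
    set x : ℕ → ℕ := fun r =>
      if h : r = 0 then 0 else if h2 : r - 1 < k then f ⟨r - 1, h2⟩ else n + 1 with hxdef
    have hx0 : x 0 = 0 := rfl
    have hxval : ∀ (r : ℕ) (h : r < k), x (r + 1) = f ⟨r, h⟩ := by
      intro r h
      show (if h : r + 1 = 0 then 0 else
        if h2 : r + 1 - 1 < k then f ⟨r + 1 - 1, h2⟩ else n + 1) = f ⟨r, h⟩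
      rw [dif_neg (by omega), dif_pos (show r + 1 - 1 < k by omega)]
      exact congrArg f rfl
    have hxtop : ∀ r : ℕ, r ≠ 0 → ¬ (r - 1 < k) → x r = n + 1 := by
      intro r h1 h2
      show (if h : r = 0 then 0 else
        if h2 : r - 1 < k then f ⟨r - 1, h2⟩ else n + 1) = n + 1
      rw [dif_neg h1, dif_neg h2]
    have hxk : x k = f ⟨k - 1, by omega⟩ := by
      have h := hxval (k - 1) (by omega)
      rwa [show k - 1 + 1 = k from by omega] at h
    refine ⟨k + 1, x, by omega, hx0, hxtop (k + 1) (by omega) (by omega), ?_, ?_⟩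
    · intro r hr
      rcases Nat.eq_zero_or_pos r with rfl | hr0
      · rw [hx0, hxval 0 hk1]
        exact lt_of_lt_of_le one_pos (hbound ⟨0, hk1⟩).1
      · obtain ⟨s, rfl⟩ : ∃ s, r = s + 1 := ⟨r - 1, by omega⟩
        have hs : s < k := by omega
        rw [hxval s hs]
        rcases Nat.lt_or_ge (s + 1) k with h | h
        · rw [hxval (s + 1) h]
          exact f.strictMono (by simp [Fin.lt_def])
        · rw [hxtop (s + 1 + 1) (by omega) (by omega)]
          have := (hbound ⟨s, hs⟩).2
          omega
    · rw [Finset.sum_range_succ]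
      have hlast : gaWeight n a (x k) (x (k + 1)) = 0 := by
        have h1 : x (k + 1) = n + 1 := hxtop (k + 1) (by omega) (by omega)
        have h2 : x k ≠ 0 := by
          rw [hxk]; have := (hbound ⟨k - 1, by omega⟩).1; omega
        simp [gaWeight, h1, h2]
      rw [hlast, add_zero]
      have hterm : ∀ r ∈ Finset.range k,
          gaWeight n a (x r) (x (r + 1)) = a (x (r + 1)) := by
        intro r hr
        rw [Finset.mem_range] at hr
        have h1 : x (r + 1) ≤ n := by rw [hxval r hr]; exact (hbound ⟨r, hr⟩).2
        simp [gaWeight, h1]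
      rw [Finset.sum_congr rfl hterm, ← hsum]
      apply Finset.sum_bij (fun r hr => x (r + 1))
      · intro r hr
        rw [Finset.mem_range] at hr
        rw [hxval r hr]
        exact hfS ⟨r, hr⟩
      · intro r hr s hs hrs
        rw [Finset.mem_range] at hr hs
        rw [hxval r hr, hxval s hs] at hrs
        have := f.injective hrs
        simpa using congrArg Fin.val this
      · intro j hj
        have hjr : j ∈ Set.range f := by
          rw [Finset.range_orderEmbOfFin]
          exact hj
        obtain ⟨i, hi⟩ := hjr
        exact ⟨i.val, Finset.mem_range.2 i.isLt, by rw [hxval i.val i.isLt, Fin.eta]; exact hi⟩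
      · intro r hr
        rfl
end

section
/- Let n ≥ 1 and let a_1,…,a_n be integers. If 0 = x_0 < x_1 < ⋯ < x_m = n+1 is a directed path from s = 0 to t = n+1 in G_A of total weight 0, then m ≥ 2 (the path is not the direct arc (0,n+1)) and the set S = {x_1,…,x_{m-1}} is a nonempty subset of {1,…,n} with Σ_{j∈S} a_j = 0. -/
/-- If `0 = x₀ < x₁ < ⋯ < x_m = n+1` is a directed path from `s = 0` to `t = n+1`
in `G_A` of total weight `0`, then `m ≥ 2` (the path is not the direct arc
`(0, n+1)`) and `S = {x₁,…,x_{m-1}}` is a nonempty subset of `{1,…,n}` with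
`∑_{j ∈ S} a j = 0`. -/
theorem nullWeightedPath_to_subsetSum (n : ℕ) (hn : 1 ≤ n) (a : ℕ → ℤ)
    (m : ℕ) (x : ℕ → ℕ) (hm : 1 ≤ m) (hx0 : x 0 = 0) (hxm : x m = n + 1)
    (hmono : ∀ r, r < m → x r < x (r + 1))
    (hw : ∑ r ∈ Finset.range m, gaWeight n a (x r) (x (r + 1)) = 0) :
    2 ≤ m ∧
      (Finset.image x (Finset.Icc 1 (m - 1))).Nonempty ∧
      Finset.image x (Finset.Icc 1 (m - 1)) ⊆ Finset.Icc 1 n ∧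
      ∑ j ∈ Finset.image x (Finset.Icc 1 (m - 1)), a j = 0 := by
  have hlt : ∀ s r, r < s → s ≤ m → x r < x s := by
    intro s
    induction s with
    | zero => omega
    | succ s ih =>
      intro r hrs hsm
      rcases Nat.lt_succ_iff_lt_or_eq.mp hrs with h | h
      · exact lt_trans (ih r h (by omega)) (hmono s (by omega))
      · subst h; exact hmono r (by omega)
  have hge : ∀ r, r ≤ m → r ≤ x r := by
    intro r hr
    induction r with
    | zero => omega
    | succ r ih =>
      have := hmono r (by omega)
      have := ih (by omega)
      omega
  have hm2 : 2 ≤ m := by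
    by_contra h
    have hm1 : m = 1 := by omega
    subst hm1
    simp only [Finset.sum_range_one, hx0, hxm, gaWeight] at hw
    simp at hw
  have hbound : ∀ r, 1 ≤ r → r ≤ m - 1 → 1 ≤ x r ∧ x r ≤ n := by
    intro r h1 h2
    have h3 := hge r (by omega)
    have h4 := hlt m r (by omega) le_rfl
    omega
  refine ⟨hm2, ⟨x 1, Finset.mem_image.mpr ⟨1, Finset.mem_Icc.mpr ⟨le_rfl, by omega⟩, rfl⟩⟩,
    ?_, ?_⟩
  · intro y hy
    rcases Finset.mem_image.mp hy with ⟨r, hr, rfl⟩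
    rw [Finset.mem_Icc] at hr ⊢
    exact hbound r hr.1 hr.2
  · have hinj : ∀ i ∈ Finset.Icc 1 (m - 1), ∀ j ∈ Finset.Icc 1 (m - 1), x i = x j → i = j := by
      intro i hi j hj hij
      rw [Finset.mem_Icc] at hi hj
      by_contra hne
      rcases Nat.lt_or_ge i j with h | h
      · have := hlt j i h (by omega); omega
      · have := hlt i j (by omega) (by omega); omega
    rw [Finset.sum_image hinj]
    -- rewrite the weight sum
    have key : ∑ r ∈ Finset.range m, gaWeight n a (x r) (x (r + 1))
        = ∑ j ∈ Finset.Icc 1 (m - 1), a (x j) := by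
      obtain ⟨k, rfl⟩ : ∃ k, m = k + 1 := ⟨m - 1, by omega⟩
      rw [Finset.sum_range_succ]
      have hlast : gaWeight n a (x k) (x (k + 1)) = 0 := by
        have hk1 : 1 ≤ x k := by have := hge k (by omega); omega
        rw [hxm]
        simp only [gaWeight]
        rw [if_neg (by omega), if_neg (by omega)]
      rw [hlast, add_zero]
      have : ∀ r ∈ Finset.range k, gaWeight n a (x r) (x (r + 1)) = a (x (r + 1)) := by
        intro r hr
        rw [Finset.mem_range] at hr
        have := hbound (r + 1) (by omega) (by omega)
        simp [gaWeight, this.2]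
      rw [Finset.sum_congr rfl this]
      rw [show Finset.Icc 1 (k + 1 - 1) = Finset.Icc 1 k by norm_num]
      rw [show Finset.Icc 1 k = Finset.Ico 1 (k + 1) by rw [Finset.Ico_add_one_right_eq_Icc],
        Finset.sum_Ico_eq_sum_range]
      simp [add_comm]
    rw [← key, hw]
end

section
/- Let n ≥ 1, let a_1,…,a_n be integers, and let P be a natural number with P + a_j ≥ 0 for all 1 ≤ j ≤ n. In the weighted DAG G'_A with K = (n+1)P, there exists a directed path from s = 0 to t = n+1 of total weight exactly K if and only if there exists a nonempty subset S ⊆ {1,…,n} with Σ_{j∈S} a_j = 0. (Correctness of the reduction from SUBSET SUM used to prove that the K Weighted Path problem with nonnegative weights is NP-complete on linear orders.) -/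
/-!
Along a path `0 = x₀ < x₁ < ⋯ < x_k < x_{k+1} = n+1` with `k ≥ 1` the `P`-parts of the arc
weights telescope to `(n+1)P`, so the path weighs `K + ∑_{r=1}^{k} a (x r)`, while the single arc
`0 → n+1` weighs `K + 1`. Hence the paths of weight `K` are exactly those whose (nonempty) set of
interior vertices is a zero-sum subset of `{1, …, n}`, and every such subset is the interior of
the path visiting it in increasing order.
-/

/-- Weight function of the DAG `G'_A` on vertices `0, 1, …, n+1` (a linear order):
`w i j = (j-i)·P + a j` for `0 ≤ i < j ≤ n`, `w i (n+1) = (n+1-i)·P` for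
`1 ≤ i ≤ n`, and `w 0 (n+1) = (n+1)·P + 1`. -/
def gaWeight' (n : ℕ) (a : ℕ → ℤ) (P : ℕ) (i j : ℕ) : ℤ :=
  if j ≤ n then ((j : ℤ) - (i : ℤ)) * (P : ℤ) + a j
  else if i = 0 then ((n : ℤ) + 1) * (P : ℤ) + 1
  else ((n : ℤ) + 1 - (i : ℤ)) * (P : ℤ)

open Finset

section

variable {n : ℕ} {a : ℕ → ℤ} {P : ℕ}

theorem gaWeight'_of_le {i j : ℕ} (hj : j ≤ n) :
    gaWeight' n a P i j = ((j : ℤ) - i) * P + a j :=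
  if_pos hj

theorem gaWeight'_zero_succ : gaWeight' n a P 0 (n + 1) = ((n : ℤ) + 1) * P + 1 := by
  simp [gaWeight']

theorem gaWeight'_succ_of_ne_zero {i : ℕ} (hi : i ≠ 0) :
    gaWeight' n a P i (n + 1) = ((n : ℤ) + 1 - i) * P := by
  simp [gaWeight', hi]

theorem sum_gaWeight'_telescope {x : ℕ → ℕ} {k : ℕ} (hint : ∀ r < k, x (r + 1) ≤ n)
    (hlast : x k ≠ 0) (htop : x (k + 1) = n + 1) :
    ∑ r ∈ range (k + 1), gaWeight' n a P (x r) (x (r + 1)) =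
      ((n : ℤ) + 1 - x 0) * P + ∑ r ∈ range k, a (x (r + 1)) := by
  rw [sum_range_succ, htop, gaWeight'_succ_of_ne_zero hlast,
    sum_congr rfl fun r hr => gaWeight'_of_le (hint r (mem_range.1 hr)),
    sum_add_distrib, ← sum_mul, sum_range_sub (fun r => (x r : ℤ))]
  ring

def pathInterior (x : ℕ → ℕ) (k : ℕ) : Finset ℕ :=
  (range k).image fun r => x (r + 1)

theorem sum_pathInterior {M : Type*} [AddCommMonoid M] (f : ℕ → M) {x : ℕ → ℕ} {k : ℕ}
    (hx : StrictMonoOn x (Set.Iic k)) :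
    ∑ j ∈ pathInterior x k, f j = ∑ r ∈ range k, f (x (r + 1)) :=
  sum_image fun r hr s hs h => by
    simp only [coe_range, Set.mem_Iio] at hr hs
    exact Nat.succ_injective (hx.injOn (by simp; omega) (by simp; omega) h)

theorem pathInterior_subset_Icc {k : ℕ} {x : ℕ → ℕ} (hx : StrictMonoOn x (Set.Iic (k + 1)))
    (h0 : x 0 = 0) (htop : x (k + 1) = n + 1) : pathInterior x k ⊆ Icc 1 n := by
  intro j hj
  obtain ⟨r, hr, rfl⟩ := mem_image.1 hj
  rw [mem_range] at hr
  have hlow := hx (by simp) (by simp; omega) (by omega : 0 < r + 1)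
  have hhigh := hx (by simp; omega) (by simp) (by omega : r + 1 < k + 1)
  rw [mem_Icc]
  omega

theorem sum_gaWeight'_path {k : ℕ} {x : ℕ → ℕ} (hk : 1 ≤ k)
    (hx : StrictMonoOn x (Set.Iic (k + 1))) (h0 : x 0 = 0) (htop : x (k + 1) = n + 1) :
    ∑ r ∈ range (k + 1), gaWeight' n a P (x r) (x (r + 1)) =
      ((n : ℤ) + 1) * P + ∑ j ∈ pathInterior x k, a j := by
  have hint : ∀ r < k, x (r + 1) ≤ n := fun r hr =>
    (mem_Icc.1 (pathInterior_subset_Icc hx h0 htop (mem_image_of_mem _ (mem_range.2 hr)))).2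
  have hlast : x k ≠ 0 := by
    have := hx (by simp) (by simp) (by omega : 0 < k)
    omega
  rw [sum_gaWeight'_telescope hint hlast htop, sum_pathInterior a (hx.mono (by simp)), h0]
  simp

theorem exists_path_with_interior {S : Finset ℕ} (hS : S ⊆ Icc 1 n) :
    ∃ x : ℕ → ℕ, x 0 = 0 ∧ x (#S + 1) = n + 1 ∧ StrictMonoOn x (Set.Iic (#S + 1)) ∧
      pathInterior x #S = S := by
  let y : ℕ → ℕ := fun r => if h : r < #S then S.orderEmbOfFin rfl ⟨r, h⟩ else n + 1
  have hyS : ∀ r < #S, y r ∈ S := fun r hr => by simp [y, hr]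
  have hy_pos : ∀ r, 0 < y r := fun r => by
    by_cases hr : r < #S
    · exact (mem_Icc.1 (hS (hyS r hr))).1
    · simp [y, hr]
  have hy : ∀ r < #S, y r < y (r + 1) := fun r hr => by
    by_cases hr' : r + 1 < #S
    · simp only [y, dif_pos hr, dif_pos hr']
      exact (S.orderEmbOfFin rfl).strictMono (Fin.mk_lt_mk.2 (lt_add_one r))
    · simp only [y, dif_neg hr']
      exact Nat.lt_succ_of_le (mem_Icc.1 (hS (hyS r hr))).2
  let x : ℕ → ℕ := fun
    | 0 => 0
    | r + 1 => y r
  refine ⟨x, rfl, by simp [x, y], strictMonoOn_Iic_of_lt_succ fun r hr => ?_, ?_⟩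
  · cases r with
    | zero => exact hy_pos 0
    | succ r => exact hy r (by simpa using hr)
  · ext j
    simp only [pathInterior, mem_image, mem_range, x]
    constructor
    · rintro ⟨r, hr, rfl⟩
      exact hyS r hr
    · intro hj
      obtain ⟨i, rfl⟩ := (S.range_orderEmbOfFin rfl).ge hj
      exact ⟨i, i.2, by simp [y]⟩

end

theorem kWeightedPath_iff_subsetSum_general (n : ℕ) (a : ℕ → ℤ) (P : ℕ) :
    (∃ (m : ℕ) (x : ℕ → ℕ), 1 ≤ m ∧ x 0 = 0 ∧ x m = n + 1 ∧
        (∀ r, r < m → x r < x (r + 1)) ∧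
        ∑ r ∈ Finset.range m, gaWeight' n a P (x r) (x (r + 1)) =
          ((n : ℤ) + 1) * (P : ℤ)) ↔
      ∃ S : Finset ℕ, S.Nonempty ∧ S ⊆ Finset.Icc 1 n ∧ ∑ j ∈ S, a j = 0 := by
  constructor
  · rintro ⟨m, x, hm, hx0, hxm, hstep, hsum⟩
    have hx : StrictMonoOn x (Set.Iic m) := strictMonoOn_Iic_of_lt_succ hstep
    obtain ⟨k, rfl⟩ : ∃ k, m = k + 1 := ⟨m - 1, by omega⟩
    rcases Nat.eq_zero_or_pos k with rfl | hk
    · simp [hx0, hxm, gaWeight'_zero_succ] at hsum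
    refine ⟨pathInterior x k, ?_, pathInterior_subset_Icc hx hx0 hxm, ?_⟩
    · simpa [pathInterior] using hk.ne'
    · rw [sum_gaWeight'_path hk hx hx0 hxm] at hsum
      linarith
  · rintro ⟨S, hS, hsub, hsum⟩
    obtain ⟨x, hx0, hxk, hx, hinterior⟩ := exists_path_with_interior hsub
    refine ⟨#S + 1, x, by omega, hx0, hxk, fun r hr => hx (by simp; omega) (by simp; omega)
      (lt_add_one r), ?_⟩
    rw [sum_gaWeight'_path hS.card_pos hx hx0 hxk, hinterior, hsum, add_zero]

/-- Correctness of the reduction from SUBSET SUM for the K Weighted Path problem: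
`G'_A` has a directed path from `s = 0` to `t = n+1` of total weight exactly
`K = (n+1)·P` iff some nonempty `S ⊆ {1,…,n}` has `∑_{j ∈ S} a j = 0`. -/
theorem kWeightedPath_iff_subsetSum (n : ℕ) (hn : 1 ≤ n) (a : ℕ → ℤ) (P : ℕ)
    (hP : ∀ j, 1 ≤ j → j ≤ n → 0 ≤ (P : ℤ) + a j) :
    (∃ (m : ℕ) (x : ℕ → ℕ), 1 ≤ m ∧ x 0 = 0 ∧ x m = n + 1 ∧
        (∀ r, r < m → x r < x (r + 1)) ∧
        ∑ r ∈ Finset.range m, gaWeight' n a P (x r) (x (r + 1)) =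
          ((n : ℤ) + 1) * (P : ℤ)) ↔
      ∃ S : Finset ℕ, S.Nonempty ∧ S ⊆ Finset.Icc 1 n ∧ ∑ j ∈ S, a j = 0 :=
  kWeightedPath_iff_subsetSum_general n a P
end

section
/- Let n ≥ 1, let a_1,…,a_n be integers, and let P be a natural number with P + a_j ≥ 0 for all 1 ≤ j ≤ n. If 0 = x_0 < x_1 < ⋯ < x_m = n+1 is a directed path in G'_A of total weight exactly K = (n+1)P, then m ≥ 2 (the path is not the direct arc (0,n+1), which has weight (n+1)P + 1) and S = {x_1,…,x_{m-1}} is a nonempty subset of {1,…,n} with Σ_{j∈S} a_j = 0. -/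
/-- If `0 = x₀ < x₁ < ⋯ < x_m = n+1` is a directed path in `G'_A` of total weight
exactly `K = (n+1)·P`, then `m ≥ 2` (the path is not the direct arc `(0, n+1)`,
which has weight `(n+1)·P + 1`) and `S = {x₁,…,x_{m-1}}` is a nonempty subset of
`{1,…,n}` with `∑_{j ∈ S} a j = 0`. -/
theorem kWeightedPath_to_subsetSum (n : ℕ) (hn : 1 ≤ n) (a : ℕ → ℤ) (P : ℕ)
    (hP : ∀ j, 1 ≤ j → j ≤ n → 0 ≤ (P : ℤ) + a j)
    (m : ℕ) (x : ℕ → ℕ) (hm : 1 ≤ m) (hx0 : x 0 = 0) (hxm : x m = n + 1)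
    (hmono : ∀ r, r < m → x r < x (r + 1))
    (hw : ∑ r ∈ Finset.range m, gaWeight' n a P (x r) (x (r + 1)) =
      ((n : ℤ) + 1) * (P : ℤ)) :
    2 ≤ m ∧
      (Finset.image x (Finset.Icc 1 (m - 1))).Nonempty ∧
      Finset.image x (Finset.Icc 1 (m - 1)) ⊆ Finset.Icc 1 n ∧
      ∑ j ∈ Finset.image x (Finset.Icc 1 (m - 1)), a j = 0 := by
  -- strict monotonicity along the path
  have hmono' : ∀ r s, r < s → s ≤ m → x r < x s := by
    intro r s hrs hsm
    induction s with
    | zero => omega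
    | succ k ih =>
      rcases Nat.lt_succ_iff_lt_or_eq.mp hrs with h | h
      · exact lt_trans (ih h (by omega)) (hmono k (by omega))
      · subst h; exact hmono r (by omega)
  -- m ≥ 2
  have hm2 : 2 ≤ m := by
    by_contra h
    have hm1 : m = 1 := by omega
    subst hm1
    rw [Finset.sum_range_one, hx0, hxm, gaWeight', if_neg (by omega), if_pos rfl] at hw
    linarith
  obtain ⟨k, rfl⟩ : ∃ k, m = k + 1 := ⟨m - 1, by omega⟩
  have hk1 : 1 ≤ k := by omega
  have hmk : k + 1 - 1 = k := by omega
  rw [hmk]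
  -- bounds for interior vertices
  have hx1 : ∀ r, 1 ≤ r → r ≤ k → 1 ≤ x r ∧ x r ≤ n := by
    intro r h1 h2
    have ha := hmono' 0 r (by omega) (by omega)
    have hb := hmono' r (k + 1) (by omega) le_rfl
    omega
  -- interior weights
  have hterm : ∀ r ∈ Finset.range k, gaWeight' n a P (x r) (x (r + 1)) =
      ((x (r + 1) : ℤ) - (x r : ℤ)) * (P : ℤ) + a (x (r + 1)) := by
    intro r hr
    rw [Finset.mem_range] at hr
    have hle : x (r + 1) ≤ n := (hx1 (r + 1) (by omega) (by omega)).2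
    rw [gaWeight', if_pos hle]
  -- last weight
  have hlast : gaWeight' n a P (x k) (x (k + 1)) = ((n : ℤ) + 1 - (x k : ℤ)) * (P : ℤ) := by
    have hxk : 1 ≤ x k := (hx1 k hk1 le_rfl).1
    rw [hxm, gaWeight', if_neg (by omega), if_neg (by omega)]
  -- compute the sum of interior a-terms
  have hw' : ∑ r ∈ Finset.range k, a (x (r + 1)) = 0 := by
    rw [Finset.sum_range_succ, hlast, Finset.sum_congr rfl hterm,
      Finset.sum_add_distrib, ← Finset.sum_mul,
      Finset.sum_range_sub (fun r => (x r : ℤ)) k, hx0] at hw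
    push_cast at hw
    linarith
  -- injectivity on the interior
  have hinj : ∀ r ∈ Finset.Icc 1 k, ∀ s ∈ Finset.Icc 1 k, x r = x s → r = s := by
    intro r hr s hs hxy
    rw [Finset.mem_Icc] at hr hs
    rcases lt_trichotomy r s with h | h | h
    · have := hmono' r s h (by omega); omega
    · exact h
    · have := hmono' s r h (by omega); omega
  refine ⟨by omega, ⟨x 1, Finset.mem_image_of_mem x (Finset.mem_Icc.mpr ⟨le_rfl, hk1⟩)⟩,
    ?_, ?_⟩
  · intro j hj
    rw [Finset.mem_image] at hj
    obtain ⟨r, hr, rfl⟩ := hj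
    rw [Finset.mem_Icc] at hr
    exact Finset.mem_Icc.mpr (hx1 r hr.1 hr.2)
  · rw [Finset.sum_image hinj, show Finset.Icc 1 k = Finset.Ico 1 (k + 1) by
      rw [Finset.Ico_add_one_right_eq_Icc], Finset.sum_Ico_eq_sum_range]
    rw [show k + 1 - 1 = k from rfl]
    rw [← hw']
    exact Finset.sum_congr rfl fun r _ => by rw [Nat.add_comm]
end

section
/- Let Φ be a CNF formula with clauses C_1,…,C_k (k ≥ 1), each clause a finite set of literals involving pairwise distinct variables. Then Φ is satisfiable if and only if the digraph G_Φ contains an irreducible directed path of length K = k+1 from s to t. (Correctness of the reduction from CNF SAT used to prove the Irreducible Path of Length K problem NP-complete.) -/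
/-- Vertices of the digraph `G_Φ`: a source `s`, a sink `t`, and a vertex
`node i l` for each literal `l` of each clause `C i`. Literals over the variable
type `V` are pairs in `V × Bool`. -/
inductive Vtx (V : Type*) where
  | s : Vtx V
  | t : Vtx V
  | node : ℕ → V × Bool → Vtx V

/-- Negation of a literal: `(v, b)¯ = (v, ¬b)`. -/
def negLit {V : Type*} (l : V × Bool) : V × Bool := (l.1, !l.2)

/-- Arc relation of the digraph `G_Φ` for a CNF formula with clauses
`C 1, …, C k`: arcs `(s, (1, l))` for `l ∈ C 1`; arcs `((k, l), t)` for
`l ∈ C k`; arcs `((i, x), (i+1, y))` for `x ∈ C i`, `y ∈ C (i+1)` with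
`x ≠ ȳ`; and arcs `((i, x), (j, y))` for `x ∈ C i`, `y ∈ C j` with `j > i + 1`
and `x = ȳ`. -/
def arc {V : Type*} (k : ℕ) (C : ℕ → Finset (V × Bool)) : Vtx V → Vtx V → Prop
  | Vtx.s, Vtx.node i l => i = 1 ∧ l ∈ C 1
  | Vtx.node i l, Vtx.t => i = k ∧ l ∈ C k
  | Vtx.node i x, Vtx.node j y =>
      1 ≤ i ∧ j ≤ k ∧ x ∈ C i ∧ y ∈ C j ∧
        ((j = i + 1 ∧ x ≠ negLit y) ∨ (i + 1 < j ∧ x = negLit y))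
  | _, _ => False

/-- Correctness of the reduction from CNF SAT: a CNF formula `Φ = C 1 ∧ ⋯ ∧ C k`
(each clause a finite set of literals with pairwise distinct variables) is
satisfiable iff the digraph `G_Φ` contains an irreducible directed path of
length `K = k + 1` from `s` to `t`. -/
theorem satisfiable_iff_irreduciblePath {V : Type*} (k : ℕ) (hk : 1 ≤ k)
    (C : ℕ → Finset (V × Bool))
    (hdist : ∀ i, 1 ≤ i → i ≤ k → ∀ l ∈ C i, ∀ l' ∈ C i, l.1 = l'.1 → l = l') :
    (∃ σ : V → Bool, ∀ i, 1 ≤ i → i ≤ k → ∃ l ∈ C i, σ l.1 = l.2) ↔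
      (∃ x : ℕ → Vtx V, x 0 = Vtx.s ∧ x (k + 1) = Vtx.t ∧
        ∀ i j, i < j → j ≤ k + 1 → (arc k C (x i) (x j) ↔ j = i + 1)) := by
  classical
  constructor
  · rintro ⟨σ, hσ⟩
    have hL : ∀ i, ∃ l, (1 ≤ i → i ≤ k → l ∈ C i ∧ σ l.1 = l.2) := by
      intro i
      by_cases h : 1 ≤ i ∧ i ≤ k
      · obtain ⟨l, hl, hsl⟩ := hσ i h.1 h.2
        exact ⟨l, fun _ _ => ⟨hl, hsl⟩⟩
      · obtain ⟨l, hl, hsl⟩ := hσ 1 le_rfl hk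
        exact ⟨l, fun h1 h2 => absurd ⟨h1, h2⟩ h⟩
    choose L hLp using hL
    have hmem : ∀ i, 1 ≤ i → i ≤ k → L i ∈ C i := fun i h1 h2 => (hLp i h1 h2).1
    have hsat : ∀ i, 1 ≤ i → i ≤ k → σ (L i).1 = (L i).2 := fun i h1 h2 => (hLp i h1 h2).2
    have hne : ∀ i j, 1 ≤ i → i ≤ k → 1 ≤ j → j ≤ k → L i ≠ negLit (L j) := by
      intro i j h1 h2 h3 h4 heq
      have e1 := hsat i h1 h2
      have e2 := hsat j h3 h4
      rw [heq] at e1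
      simp only [negLit] at e1
      rw [e2] at e1
      simp at e1
    refine ⟨fun i => if i = 0 then Vtx.s else if i ≤ k then Vtx.node i (L i) else Vtx.t,
      by simp, by simp [show ¬(k+1 = 0) by omega, show ¬(k+1 ≤ k) by omega], ?_⟩
    intro i j hij hjk
    by_cases hi0 : i = 0
    · subst hi0
      by_cases hjK : j ≤ k
      · simp only [if_pos rfl, show ¬(j = 0) by omega, if_neg, if_pos hjK]
        show arc k C Vtx.s (Vtx.node j (L j)) ↔ j = 0 + 1
        constructor
        · rintro ⟨h1, _⟩; omega
        · intro h; refine ⟨by omega, ?_⟩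
          have : j = 1 := by omega
          subst this; exact hmem 1 le_rfl hk
      · have hjk1 : j = k + 1 := by omega
        subst hjk1
        simp only [if_pos rfl, show ¬(k+1 = 0) by omega, if_neg, if_neg hjK]
        show arc k C Vtx.s Vtx.t ↔ k + 1 = 0 + 1
        simp only [arc]
        constructor
        · intro h; exact h.elim
        · intro h; omega
    · have hi1 : 1 ≤ i := by omega
      have hik : i ≤ k := by omega
      by_cases hjK : j ≤ k
      · simp only [if_neg hi0, if_pos hik, show ¬(j = 0) by omega, if_neg, if_pos hjK]
        show arc k C (Vtx.node i (L i)) (Vtx.node j (L j)) ↔ j = i + 1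
        constructor
        · rintro ⟨_, _, _, _, ⟨h, _⟩ | ⟨_, h⟩⟩
          · exact h
          · exact absurd h (hne i j hi1 hik (by omega) hjK)
        · intro h
          exact ⟨hi1, hjK, hmem i hi1 hik, hmem j (by omega) hjK,
            Or.inl ⟨h, hne i j hi1 hik (by omega) hjK⟩⟩
      · have hjk1 : j = k + 1 := by omega
        subst hjk1
        simp only [if_neg hi0, if_pos hik, show ¬(k+1 = 0) by omega, if_neg, if_neg hjK]
        show arc k C (Vtx.node i (L i)) Vtx.t ↔ k + 1 = i + 1
        constructor
        · rintro ⟨h, _⟩; omega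
        · intro h
          have hik2 : i = k := by omega
          exact ⟨hik2, by rw [hik2]; exact hmem k hk le_rfl⟩
  · rintro ⟨x, h0, hK, hiff⟩
    have hstep : ∀ i, i ≤ k → arc k C (x i) (x (i+1)) :=
      fun i hi => (hiff i (i+1) (Nat.lt_succ_self i) (by omega)).mpr rfl
    have hnode : ∀ m, 1 ≤ m → m ≤ k → ∃ i l, x m = Vtx.node i l := by
      intro m h1 h2
      have ha := hstep (m-1) (by omega)
      rw [show m - 1 + 1 = m from by omega] at ha
      have hb := hstep m (by omega)
      cases hxm : x m with
      | s => rw [hxm] at ha; cases hxp : x (m-1) <;> rw [hxp] at ha <;> exact ha.elim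
      | t => rw [hxm] at hb; cases hxp : x (m+1) <;> rw [hxp] at hb <;> exact hb.elim
      | node i l => exact ⟨i, l, rfl⟩
    obtain ⟨i1, l1, hx1⟩ := hnode 1 le_rfl hk
    haveI : Nonempty (V × Bool) := ⟨l1⟩
    choose! idx lit hx using hnode
    have harc_s : idx 1 = 1 ∧ lit 1 ∈ C 1 := by
      have h := hstep 0 (by omega)
      rw [h0, hx 1 le_rfl hk] at h
      exact h
    have harc_t : idx k = k ∧ lit k ∈ C k := by
      have h := hstep k le_rfl
      rw [hK, hx k hk le_rfl] at h
      exact h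
    have harc : ∀ m, 1 ≤ m → m + 1 ≤ k →
        1 ≤ idx m ∧ idx (m+1) ≤ k ∧ lit m ∈ C (idx m) ∧ lit (m+1) ∈ C (idx (m+1)) ∧
        ((idx (m+1) = idx m + 1 ∧ lit m ≠ negLit (lit (m+1))) ∨
          (idx m + 1 < idx (m+1) ∧ lit m = negLit (lit (m+1)))) := by
      intro m h1 h2
      have h := hstep m (by omega)
      rw [hx m h1 (by omega), hx (m+1) (by omega) h2] at h
      exact h
    have hstepidx : ∀ m, 1 ≤ m → m + 1 ≤ k → idx m + 1 ≤ idx (m+1) := by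
      intro m h1 h2
      rcases (harc m h1 h2).2.2.2.2 with ⟨h, _⟩ | ⟨h, _⟩ <;> omega
    have hge : ∀ m, 1 ≤ m → m ≤ k → m ≤ idx m := by
      intro m
      induction m with
      | zero => omega
      | succ n ih =>
        intro h1 h2
        by_cases hn : n = 0
        · subst hn; rw [harc_s.1]
        · have g1 := ih (by omega) (by omega)
          have g2 := hstepidx n (by omega) (by omega)
          omega
    have hadd : ∀ d m, 1 ≤ m → m + d ≤ k → idx m + d ≤ idx (m + d) := by
      intro d
      induction d with
      | zero => intro m _ _; simp only [Nat.add_zero]; exact le_rfl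
      | succ n ih =>
        intro m h1 h2
        have h3 := ih m h1 (by omega)
        have h4 := hstepidx (m+n) (by omega) (by omega)
        have e : m + (n+1) = (m+n)+1 := rfl
        rw [e]
        omega
    have hidx : ∀ m, 1 ≤ m → m ≤ k → idx m = m := by
      intro m h1 h2
      have g1 := hge m h1 h2
      have g2 := hadd (k - m) m h1 (by omega)
      rw [show m + (k-m) = k from by omega] at g2
      have g3 := harc_t.1
      omega
    have hmem : ∀ m, 1 ≤ m → m ≤ k → lit m ∈ C m := by
      intro m h1 h2
      by_cases hm : m = k
      · subst hm; exact harc_t.2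
      · have h := (harc m h1 (by omega)).2.2.1
        rw [hidx m h1 h2] at h
        exact h
    have hnc : ∀ m j, 1 ≤ m → m < j → j ≤ k → lit m ≠ negLit (lit j) := by
      intro m j h1 h2 h3
      by_cases hj : j = m + 1
      · subst hj
        rcases (harc m h1 h3).2.2.2.2 with ⟨_, h⟩ | ⟨h, _⟩
        · exact h
        · rw [hidx m h1 (by omega), hidx (m+1) (by omega) h3] at h; omega
      · intro heq
        have hno : ¬ arc k C (x m) (x j) := fun h => hj ((hiff m j h2 (by omega)).mp h)
        apply hno
        rw [hx m h1 (by omega), hx j (by omega) h3]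
        rw [hidx m h1 (by omega), hidx j (by omega) h3]
        exact ⟨h1, h3, hmem m h1 (by omega), hmem j (by omega) h3, Or.inr ⟨by omega, heq⟩⟩
    refine ⟨fun v => if h : ∃ m, (1 ≤ m ∧ m ≤ k) ∧ (lit m).1 = v then (lit h.choose).2
      else true, ?_⟩
    intro i h1 h2
    refine ⟨lit i, hmem i h1 h2, ?_⟩
    have hex : ∃ m, (1 ≤ m ∧ m ≤ k) ∧ (lit m).1 = (lit i).1 := ⟨i, ⟨h1, h2⟩, rfl⟩
    show (if h : ∃ m, (1 ≤ m ∧ m ≤ k) ∧ (lit m).1 = (lit i).1 then (lit h.choose).2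
      else true) = (lit i).2
    rw [dif_pos hex]
    obtain ⟨⟨hm1, hm2⟩, hveq⟩ := hex.choose_spec
    set m := hex.choose with hmdef
    have hbool : ∀ a b : V × Bool, a.1 = b.1 → a ≠ negLit b → a.2 = b.2 := by
      intro a b he hne
      by_contra hb
      apply hne
      have : a.2 = !b.2 := by cases ha : a.2 <;> cases hbb : b.2 <;> simp_all
      exact Prod.ext he this
    rcases lt_trichotomy m i with h | h | h
    · exact hbool (lit m) (lit i) hveq (hnc m i hm1 h h2)
    · rw [h]
    · exact (hbool (lit i) (lit m) hveq.symm (hnc i m h1 h hm2)).symm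
end

section
/- Let Φ be a CNF formula with clauses C_1,…,C_k (k ≥ 1), each clause a finite set of literals involving pairwise distinct variables. If σ is a satisfying assignment of Φ and for each 1 ≤ i ≤ k, l_i ∈ C_i is a literal of C_i made true by σ, then the sequence s, (1,l_1), (2,l_2), …, (k,l_k), t is an irreducible directed path of length k+1 from s to t in G_Φ. -/
/-- The candidate path in `G_Φ`: `s, (1, l 1), (2, l 2), …, (k, l k), t`. -/
def pathSeq {V : Type*} (k : ℕ) (l : ℕ → V × Bool) (r : ℕ) : Vtx V :=
  if r = 0 then Vtx.s else if r ≤ k then Vtx.node r (l r) else Vtx.t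

theorem ne_negLit_of_satisfied {V : Type*} {σ : V → Bool} {x y : V × Bool}
    (hx : σ x.1 = x.2) (hy : σ y.1 = y.2) : x ≠ negLit y := by
  rintro rfl
  simp [negLit, hy] at hx

section pathSeq

variable {V : Type*} {k r : ℕ} {l : ℕ → V × Bool}

theorem pathSeq_zero : pathSeq k l 0 = Vtx.s := rfl

theorem pathSeq_of_pos_of_le (hr : 1 ≤ r) (hrk : r ≤ k) : pathSeq k l r = Vtx.node r (l r) := by
  simp [pathSeq, hrk, Nat.one_le_iff_ne_zero.mp hr]

theorem pathSeq_of_lt (hkr : k < r) : pathSeq k l r = Vtx.t := by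
  simp [pathSeq, Nat.not_le.mpr hkr, Nat.ne_zero_of_lt hkr]

end pathSeq

section arc

variable {V : Type*} {k i j : ℕ} {C : ℕ → Finset (V × Bool)} {x y : V × Bool}

theorem not_arc_s_t : ¬ arc k C (Vtx.s : Vtx V) Vtx.t := id

theorem arc_s_node_iff (hx : x ∈ C i) : arc k C Vtx.s (Vtx.node i x) ↔ i = 1 :=
  ⟨And.left, fun h => ⟨h, h ▸ hx⟩⟩

theorem arc_node_t_iff (hx : x ∈ C i) : arc k C (Vtx.node i x) Vtx.t ↔ i = k :=
  ⟨And.left, fun h => ⟨h, h ▸ hx⟩⟩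

theorem arc_node_node_iff (hi : 1 ≤ i) (hjk : j ≤ k) (hx : x ∈ C i) (hy : y ∈ C j)
    (hxy : x ≠ negLit y) : arc k C (Vtx.node i x) (Vtx.node j y) ↔ j = i + 1 := by
  simp only [arc, hi, hjk, hx, hy, ne_eq, hxy, not_false_eq_true, true_and, and_true, and_false,
    or_false]

end arc

theorem satisfying_choice_gives_irreduciblePath_general {V : Type*} (k : ℕ) (hk : 1 ≤ k)
    (C : ℕ → Finset (V × Bool))
    (σ : V → Bool) (l : ℕ → V × Bool)
    (hl : ∀ i, 1 ≤ i → i ≤ k → l i ∈ C i ∧ σ (l i).1 = (l i).2) :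
    pathSeq k l 0 = Vtx.s ∧ pathSeq k l (k + 1) = Vtx.t ∧
      ∀ i j, i < j → j ≤ k + 1 →
        (arc k C (pathSeq k l i) (pathSeq k l j) ↔ j = i + 1) := by
  refine ⟨pathSeq_zero, pathSeq_of_lt k.lt_succ_self, fun i j hij hjk => ?_⟩
  rcases Nat.eq_zero_or_pos i with rfl | hi
  · rcases hjk.lt_or_eq with hj | rfl
    · rw [pathSeq_zero, pathSeq_of_pos_of_le hij (by omega),
        arc_s_node_iff (hl j hij (by omega)).1]
    · rw [pathSeq_zero, pathSeq_of_lt k.lt_succ_self]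
      exact iff_of_false not_arc_s_t (by omega)
  · have hik : i ≤ k := by omega
    rw [pathSeq_of_pos_of_le hi hik]
    rcases hjk.lt_or_eq with hj | rfl
    · have hjk : j ≤ k := by omega
      rw [pathSeq_of_pos_of_le (by omega) hjk]
      exact arc_node_node_iff hi hjk (hl i hi hik).1 (hl j (by omega) hjk).1
        (ne_negLit_of_satisfied (hl i hi hik).2 (hl j (by omega) hjk).2)
    · rw [pathSeq_of_lt k.lt_succ_self, arc_node_t_iff (hl i hi hik).1]
      omega

/-- If `σ` satisfies `Φ` and `l i ∈ C i` is a literal of clause `C i` made true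
by `σ` for each `1 ≤ i ≤ k`, then `s, (1, l 1), …, (k, l k), t` is an
irreducible directed path of length `k + 1` from `s` to `t` in `G_Φ`. -/
theorem satisfying_choice_gives_irreduciblePath {V : Type*} (k : ℕ) (hk : 1 ≤ k)
    (C : ℕ → Finset (V × Bool))
    (hdist : ∀ i, 1 ≤ i → i ≤ k → ∀ l ∈ C i, ∀ l' ∈ C i, l.1 = l'.1 → l = l')
    (σ : V → Bool) (l : ℕ → V × Bool)
    (hl : ∀ i, 1 ≤ i → i ≤ k → l i ∈ C i ∧ σ (l i).1 = (l i).2) :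
    pathSeq k l 0 = Vtx.s ∧ pathSeq k l (k + 1) = Vtx.t ∧
      ∀ i j, i < j → j ≤ k + 1 →
        (arc k C (pathSeq k l i) (pathSeq k l j) ↔ j = i + 1) :=
  satisfying_choice_gives_irreduciblePath_general k hk C σ l hl
end

section
/- Let Φ be a CNF formula with clauses C_1,…,C_k (k ≥ 1), each clause a finite set of literals involving pairwise distinct variables. If s = x_0, x_1, …, x_{k+1} = t is an irreducible directed path of length k+1 from s to t in G_Φ, then for each 1 ≤ i ≤ k the vertex x_i has the form (i, l_i) with l_i ∈ C_i, and there is an assignment σ making every l_i true; hence Φ is satisfiable. -/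
/-!
None of `x 1, …, x k` is `s` (no arc enters `s`) or `t` (otherwise it would give a shortcut
to `x (k + 1) = t`), so they are clause vertices. Clause indices strictly increase along arcs,
and the arcs out of `s` and into `t` pin the first index to `1` and the last to `k`; hence
`x p` lies in clause `p`. No two literals on the path are complementary: for consecutive ones
the short arc forbids it, and for distant ones a complementary pair would be a long arc, i.e. a
chord. Setting a variable to `true` exactly when its positive literal lies on the path then
satisfies every literal of the path.
-/

theorem Nat.apply_eq_self_of_lt_succ {f : ℕ → ℕ} {a b : ℕ}
    (hf : ∀ p, a ≤ p → p < b → f p < f (p + 1)) (ha : f a = a) (hb : f b = b) {p : ℕ}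
    (hap : a ≤ p) (hpb : p ≤ b) : f p = p := by
  have gap : ∀ q r, a ≤ q → q ≤ r → r ≤ b → f q + (r - q) ≤ f r := by
    intro q r hq hqr
    induction r, hqr using Nat.le_induction with
    | base => simp
    | succ r hqr ih =>
      intro hr
      have := hf r (by omega) hr
      have := ih (by omega)
      omega
  have := gap a p le_rfl hap hpb
  have := gap p b hap hpb le_rfl
  omega

def Vtx.index {V : Type*} : Vtx V → ℕ
  | node i _ => i
  | _ => 0

section

variable {V : Type*} {k : ℕ} {C : ℕ → Finset (V × Bool)}

@[simp]
theorem negLit_negLit (a : V × Bool) : negLit (negLit a) = a := by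
  simp [negLit]

theorem negLit_ne_self (a : V × Bool) : negLit a ≠ a := by
  simp [negLit, Prod.ext_iff]

theorem not_arc_s (u : Vtx V) : ¬ arc k C u Vtx.s := by
  cases u <;> simp [arc]

theorem mem_of_arc_node {u : Vtx V} {i : ℕ} {a : V × Bool} (h : arc k C u (Vtx.node i a)) :
    a ∈ C i := by
  cases u with
  | s => obtain ⟨rfl, ha⟩ := h; exact ha
  | t => exact h.elim
  | node j b => exact h.2.2.2.1

theorem index_lt_of_arc {i j : ℕ} {a b : V × Bool}
    (h : arc k C (Vtx.node i a) (Vtx.node j b)) : i < j := by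
  obtain ⟨-, -, -, -, ⟨rfl, -⟩ | ⟨hij, -⟩⟩ := h <;> omega

end

theorem exists_assignment_of_negLit_not_mem {V : Type*} (L : Set (V × Bool))
    (hL : ∀ a ∈ L, negLit a ∉ L) : ∃ σ : V → Bool, ∀ a ∈ L, σ a.1 = a.2 := by
  classical
  refine ⟨fun v => decide ((v, true) ∈ L), ?_⟩
  rintro ⟨v, _ | _⟩ ha
  · simpa [negLit] using hL _ ha
  · simpa using ha

structure IsIrreduciblePath {V : Type*} (k : ℕ) (C : ℕ → Finset (V × Bool)) (K : ℕ)
    (x : ℕ → Vtx V) : Prop where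
  start : x 0 = Vtx.s
  finish : x K = Vtx.t
  arc_iff : ∀ i j, i < j → j ≤ K → (arc k C (x i) (x j) ↔ j = i + 1)

namespace IsIrreduciblePath

variable {V : Type*} {k K : ℕ} {C : ℕ → Finset (V × Bool)} {x : ℕ → Vtx V}

theorem arc_succ (hx : IsIrreduciblePath k C K x) {p : ℕ} (hp : p < K) :
    arc k C (x p) (x (p + 1)) :=
  (hx.arc_iff p (p + 1) p.lt_succ_self hp).2 rfl

theorem not_arc (hx : IsIrreduciblePath k C K x) {i j : ℕ} (hij : i + 1 < j) (hj : j ≤ K) :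
    ¬ arc k C (x i) (x j) := fun h => by
  have := (hx.arc_iff i j (by omega) hj).1 h
  omega

theorem exists_node (hx : IsIrreduciblePath k C K x) {p : ℕ} (hp : 0 < p) (hpK : p < K) :
    ∃ i, ∃ a ∈ C i, x p = Vtx.node i a := by
  have hin := hx.arc_succ (p := p - 1) (by omega)
  rw [Nat.sub_add_cancel hp] at hin
  cases hxp : x p with
  | s => rw [hxp] at hin; exact absurd hin (not_arc_s _)
  | t =>
    refine absurd ?_ (hx.not_arc (i := p - 1) (by omega) le_rfl)
    rwa [hx.finish, ← hxp]
  | node i a => rw [hxp] at hin; exact ⟨i, a, mem_of_arc_node hin, rfl⟩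

theorem index_lt_index_succ (hx : IsIrreduciblePath k C K x) {p : ℕ} (hp : 0 < p)
    (hpK : p + 1 < K) : (x p).index < (x (p + 1)).index := by
  obtain ⟨i, a, -, hi⟩ := hx.exists_node hp (by omega)
  obtain ⟨j, b, -, hj⟩ := hx.exists_node (p := p + 1) (by omega) hpK
  have := hx.arc_succ (p := p) (by omega)
  rw [hi, hj] at this ⊢
  exact index_lt_of_arc this

theorem index_one (hx : IsIrreduciblePath k C K x) (hK : 1 < K) : (x 1).index = 1 := by
  have : arc k C (x 0) (x 1) := hx.arc_succ (by omega)
  obtain ⟨i, a, -, hi⟩ := hx.exists_node one_pos hK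
  rw [hx.start, hi] at this
  rw [hi]
  exact this.1

theorem index_last (hx : IsIrreduciblePath k C (k + 1) x) (hk : 1 ≤ k) : (x k).index = k := by
  have := hx.arc_succ (p := k) (by omega)
  obtain ⟨i, a, -, hi⟩ := hx.exists_node hk (by omega)
  rw [hx.finish, hi] at this
  rw [hi]
  exact this.1

theorem exists_eq_node (hx : IsIrreduciblePath k C (k + 1) x) {p : ℕ} (hp : 1 ≤ p)
    (hpk : p ≤ k) : ∃ a, a ∈ C p ∧ x p = Vtx.node p a := by
  obtain ⟨i, a, ha, hi⟩ := hx.exists_node hp (by omega)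
  have hidx : (x p).index = p :=
    Nat.apply_eq_self_of_lt_succ (f := fun q => (x q).index)
      (fun q hq hqk => hx.index_lt_index_succ hq (by omega)) (hx.index_one (by omega))
      (hx.index_last (by omega)) hp hpk
  rw [hi] at hidx
  subst hidx
  exact ⟨a, ha, hi⟩

theorem ne_negLit (hx : IsIrreduciblePath k C (k + 1) x) {i j : ℕ} {a b : V × Bool}
    (hi : 1 ≤ i) (hij : i < j) (hjk : j ≤ k) (ha : a ∈ C i) (hb : b ∈ C j)
    (hxi : x i = Vtx.node i a) (hxj : x j = Vtx.node j b) : a ≠ negLit b := by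
  intro hab
  rcases Nat.lt_or_ge (i + 1) j with hlong | hshort
  · exact hx.not_arc hlong (by omega) (by rw [hxi, hxj]; exact ⟨hi, hjk, ha, hb, .inr ⟨hlong, hab⟩⟩)
  · have := hx.arc_succ (p := i) (by omega)
    rw [hxi, show i + 1 = j by omega, hxj] at this
    obtain ⟨-, -, -, -, ⟨-, hne⟩ | ⟨hlt, -⟩⟩ := this
    · exact hne hab
    · omega

theorem negLit_not_mem (hx : IsIrreduciblePath k C (k + 1) x) {l : ℕ → V × Bool}
    (hl : ∀ p, 1 ≤ p → p ≤ k → l p ∈ C p ∧ x p = Vtx.node p (l p)) :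
    ∀ a ∈ l '' Set.Icc 1 k, negLit a ∉ l '' Set.Icc 1 k := by
  rintro _ ⟨i, ⟨hi, hik⟩, rfl⟩ ⟨j, ⟨hj, hjk⟩, hji⟩
  obtain ⟨hli, hxi⟩ := hl i hi hik
  obtain ⟨hlj, hxj⟩ := hl j hj hjk
  rcases lt_trichotomy i j with hij | rfl | hji'
  · exact hx.ne_negLit hi hij hjk hli hlj hxi hxj (by rw [hji, negLit_negLit])
  · exact negLit_ne_self _ hji.symm
  · exact hx.ne_negLit hj hji' hik hlj hli hxj hxi hji

end IsIrreduciblePath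

theorem irreduciblePath_gives_satisfying_general {V : Type*} (k : ℕ) (hk : 1 ≤ k)
    (C : ℕ → Finset (V × Bool))
    (x : ℕ → Vtx V) (hx0 : x 0 = Vtx.s) (hxend : x (k + 1) = Vtx.t)
    (hirr : ∀ i j, i < j → j ≤ k + 1 → (arc k C (x i) (x j) ↔ j = i + 1)) :
    ∃ l : ℕ → V × Bool,
      (∀ i, 1 ≤ i → i ≤ k → l i ∈ C i ∧ x i = Vtx.node i (l i)) ∧
      ∃ σ : V → Bool, ∀ i, 1 ≤ i → i ≤ k → σ (l i).1 = (l i).2 := by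
  have hx : IsIrreduciblePath k C (k + 1) x := ⟨hx0, hxend, hirr⟩
  have : Nonempty (V × Bool) := let ⟨a, _⟩ := hx.exists_eq_node le_rfl hk; ⟨a⟩
  choose! l hl using fun p (hp : 1 ≤ p) (hpk : p ≤ k) => hx.exists_eq_node hp hpk
  obtain ⟨σ, hσ⟩ := exists_assignment_of_negLit_not_mem _ (hx.negLit_not_mem hl)
  exact ⟨l, hl, σ, fun i hi hik => hσ _ ⟨i, ⟨hi, hik⟩, rfl⟩⟩

/-- If `s = x 0, x 1, …, x (k+1) = t` is an irreducible directed path of length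
`k + 1` from `s` to `t` in `G_Φ`, then for each `1 ≤ i ≤ k` the vertex `x i` has
the form `(i, l i)` with `l i ∈ C i`, and there is an assignment `σ` making
every `l i` true; hence `Φ` is satisfiable. -/
theorem irreduciblePath_gives_satisfying {V : Type*} (k : ℕ) (hk : 1 ≤ k)
    (C : ℕ → Finset (V × Bool))
    (hdist : ∀ i, 1 ≤ i → i ≤ k → ∀ l ∈ C i, ∀ l' ∈ C i, l.1 = l'.1 → l = l')
    (x : ℕ → Vtx V) (hx0 : x 0 = Vtx.s) (hxend : x (k + 1) = Vtx.t)
    (hirr : ∀ i j, i < j → j ≤ k + 1 → (arc k C (x i) (x j) ↔ j = i + 1)) :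
    ∃ l : ℕ → V × Bool,
      (∀ i, 1 ≤ i → i ≤ k → l i ∈ C i ∧ x i = Vtx.node i (l i)) ∧
      ∃ σ : V → Bool, ∀ i, 1 ≤ i → i ≤ k → σ (l i).1 = (l i).2 :=
  irreduciblePath_gives_satisfying_general k hk C x hx0 hxend hirr
end

section
/- Let Φ be a CNF formula with clauses C_1,…,C_k (k ≥ 1), each clause a finite set of literals involving pairwise distinct variables, and let s, (1,l_1), (2,l_2), …, (k,l_k), t be an irreducible directed path in G_Φ with l_i ∈ C_i for each i. Then the chosen literals are pairwise non-contradictory: for all 1 ≤ i < j ≤ k, l_i ≠ l_j¯ (since for j = i+1 the arc ((i,l_i),(i+1,l_{i+1})) requires l_i ≠ l_{i+1}¯, and for j > i+1 an equality l_i = l_j¯ would create the arc ((i,l_i),(j,l_j)), contradicting irreducibility). -/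
theorem pathSeq_of_pos_of_le_s15 {V : Type*} {k : ℕ} (l : ℕ → V × Bool) {r : ℕ}
    (h₁ : 1 ≤ r) (h₂ : r ≤ k) : pathSeq k l r = Vtx.node r (l r) := by
  simp [pathSeq, h₂, Nat.one_le_iff_ne_zero.mp h₁]

theorem arc_node_of_eq_negLit {V : Type*} {k : ℕ} {C : ℕ → Finset (V × Bool)} {i j : ℕ}
    {x y : V × Bool} (hi : 1 ≤ i) (hij : i + 1 < j) (hj : j ≤ k) (hx : x ∈ C i) (hy : y ∈ C j)
    (hxy : x = negLit y) : arc k C (Vtx.node i x) (Vtx.node j y) :=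
  ⟨hi, hj, hx, hy, Or.inr ⟨hij, hxy⟩⟩

theorem ne_negLit_of_arc_node_succ {V : Type*} {k : ℕ} {C : ℕ → Finset (V × Bool)} {i : ℕ}
    {x y : V × Bool} (h : arc k C (Vtx.node i x) (Vtx.node (i + 1) y)) : x ≠ negLit y := by
  obtain ⟨-, -, -, -, ⟨-, hne⟩ | ⟨hlt, -⟩⟩ := h
  · exact hne
  · omega

theorem irreduciblePath_literals_noncontradictory_general {V : Type*} (k : ℕ)
    (C : ℕ → Finset (V × Bool))
    (l : ℕ → V × Bool) (hl : ∀ i, 1 ≤ i → i ≤ k → l i ∈ C i)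
    (hirr : ∀ i j, i < j → j ≤ k + 1 →
      (arc k C (pathSeq k l i) (pathSeq k l j) ↔ j = i + 1)) :
    ∀ i j, 1 ≤ i → i < j → j ≤ k → l i ≠ negLit (l j) := by
  intro i j hi hij hjk hneg
  have hpath := hirr i j hij (by omega)
  rw [pathSeq_of_pos_of_le_s15 l hi (by omega), pathSeq_of_pos_of_le_s15 l (by omega) hjk] at hpath
  rcases (Nat.succ_le_of_lt hij).eq_or_lt with rfl | hlt
  · exact ne_negLit_of_arc_node_succ (hpath.mpr rfl) hneg
  · have hadjacent := hpath.mp <|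
      arc_node_of_eq_negLit hi hlt hjk (hl i hi (by omega)) (hl j (by omega) hjk) hneg
    omega

/-- If `s, (1, l 1), …, (k, l k), t` (with `l i ∈ C i`) is an irreducible
directed path in `G_Φ`, then the chosen literals are pairwise
non-contradictory: `l i ≠ (l j)¯` for all `1 ≤ i < j ≤ k`. -/
theorem irreduciblePath_literals_noncontradictory {V : Type*} (k : ℕ) (hk : 1 ≤ k)
    (C : ℕ → Finset (V × Bool))
    (hdist : ∀ i, 1 ≤ i → i ≤ k → ∀ l ∈ C i, ∀ l' ∈ C i, l.1 = l'.1 → l = l')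
    (l : ℕ → V × Bool) (hl : ∀ i, 1 ≤ i → i ≤ k → l i ∈ C i)
    (hirr : ∀ i j, i < j → j ≤ k + 1 →
      (arc k C (pathSeq k l i) (pathSeq k l j) ↔ j = i + 1)) :
    ∀ i j, 1 ≤ i → i < j → j ≤ k → l i ≠ negLit (l j) :=
  irreduciblePath_literals_noncontradictory_general k C l hl hirr
end
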